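/- For every g ∈ C¹(ℝ^{p+1}, 𝔸), viewed as a function of x = x_p + x_q ∈ M depending only on x_p, and every k ∈ ℕ, the following identities hold: (i) D_{x_p}(x_q^{2k} g) = x_q^{2k}(D_{x_p} g); (ii) D_{x_p}(x_q^{2k+1} g) = x_q^{2k+1}(D̄_{x_p} g); (iii) D_{x_q}(x_q^{2k} g) = −2k x_q^{2k−1} g; (iv) D_{x_q}(x_q^{2k+1} g) = −(2k+q) x_q^{2k} g. -/

import Mathlib

open scoped BigOperators
open Filter Topology

namespace GPSM

variable (A : Type*) [NormedAddCommGroup A] [NormedSpace ℝ A] [Mul A] [One A]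

/-- `A` is a real alternative algebra with unit `1`, of finite dimension `d > 1`,
equipped with an anti-involution `conj` (a real-linear map with `(a^c)^c = a`,
`(ab)^c = b^c a^c`, fixing the reals).  The associator is alternating (left/right
alternative laws). -/
structure IsAltStarAlg (conj : A → A) : Prop where
  finDim : FiniteDimensional ℝ A
  one_lt_finrank : 1 < Module.finrank ℝ A
  mul_add' : ∀ a b c : A, a * (b + c) = a * b + a * c
  add_mul' : ∀ a b c : A, (a + b) * c = a * c + b * c
  smul_mul' : ∀ (r : ℝ) (a b : A), (r • a) * b = r • (a * b)
  mul_smul' : ∀ (r : ℝ) (a b : A), a * (r • b) = r • (a * b)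
  one_mul' : ∀ a : A, 1 * a = a
  mul_one' : ∀ a : A, a * 1 = a
  alt_left : ∀ a b : A, a * (a * b) = a * a * b
  alt_right : ∀ a b : A, a * b * b = a * (b * b)
  conj_add : ∀ a b : A, conj (a + b) = conj a + conj b
  conj_smul : ∀ (r : ℝ) (a : A), conj (r • a) = r • conj a
  conj_conj : ∀ a : A, conj (conj a) = a
  conj_mul : ∀ a b : A, conj (a * b) = conj b * conj a
  conj_one : conj 1 = 1

/-- `v 0, v 1, …, v m` is a hypercomplex basis of the hypercomplex subspace
`M = span(v 0, …, v m)` of `A`: `v 0 = 1`, `t(v s) = 0`, `n(v s) = 1`, the `v s`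
anticommute for distinct `s, t ∈ {1,…,m}`, they are linearly independent, and
`M` is contained in the quadratic cone `Q_A`. -/
structure IsHypBasis (conj : A → A) (v : ℕ → A) (m : ℕ) : Prop where
  v_zero : v 0 = 1
  trace_zero : ∀ s, 1 ≤ s → s ≤ m → v s + conj (v s) = 0
  norm_one : ∀ s, 1 ≤ s → s ≤ m → v s * conj (v s) = 1
  anticomm : ∀ s t, 1 ≤ s → s ≤ m → 1 ≤ t → t ≤ m → s ≠ t → v s * v t = -(v t * v s)
  indep : LinearIndependent ℝ (fun i : Fin (m + 1) => v i)
  mem_cone : ∀ x ∈ Submodule.span ℝ (Set.range fun i : Fin (m + 1) => v (i : ℕ)),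
      ∃ tr nr : ℝ, x + conj x = tr • (1 : A) ∧ x * conj x = nr • (1 : A) ∧
        ((∃ r : ℝ, x = r • (1 : A)) ∨ tr ^ 2 < 4 * nr)

variable {A}

/-- Identification of `ℝ^{m+1}` with the hypercomplex subspace `M`:
`(x_0,…,x_m) ↦ Σ x_s • v s`. -/
def emb (v : ℕ → A) (m : ℕ) (x : Fin (m + 1) → ℝ) : A :=
  ∑ s : Fin (m + 1), x s • v (s : ℕ)

/-- First `p+1` coordinates of a point of `M ≅ ℝ^{m+1}`, i.e. the `x_p`-part. -/
def projP (m p : ℕ) (x : Fin (m + 1) → ℝ) : Fin (p + 1) → ℝ := fun s =>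
  if h : (s : ℕ) < m + 1 then x ⟨(s : ℕ), h⟩ else 0

/-- Inclusion `ℝ^{p+1} ⊆ ℝ^{m+1}` (remaining coordinates `0`). -/
def injP (m p : ℕ) (y : Fin (p + 1) → ℝ) : Fin (m + 1) → ℝ := fun s =>
  if h : (s : ℕ) < p + 1 then y ⟨(s : ℕ), h⟩ else 0

/-- The coordinates of `x_q` (last `q = m - p` coordinates of `x`). -/
def xqpart (m p : ℕ) (x : Fin (m + 1) → ℝ) : Fin (m + 1) → ℝ := fun s =>
  if (s : ℕ) ≤ p then 0 else x s

/-- The coordinates of `x_p` inside `ℝ^{m+1}`. -/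
def xppart (m p : ℕ) (x : Fin (m + 1) → ℝ) : Fin (m + 1) → ℝ := fun s =>
  if (s : ℕ) ≤ p then x s else 0

/-- `r = |x_q|`. -/
noncomputable def rad (m p : ℕ) (x : Fin (m + 1) → ℝ) : ℝ :=
  Real.sqrt (∑ s : Fin (m + 1), (xqpart m p x s) ^ 2)

/-- `ω = x_q / |x_q|` (coordinates), `0` when `x_q = 0`. -/
noncomputable def normq (m p : ℕ) (x : Fin (m + 1) → ℝ) : Fin (m + 1) → ℝ :=
  (rad m p x)⁻¹ • xqpart m p x

/-- The reflection `x = x_p + x_q ↦ x_⋄ = x_p - x_q`. -/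
def reflP (m p : ℕ) (x : Fin (m + 1) → ℝ) : Fin (m + 1) → ℝ := fun s =>
  if (s : ℕ) ≤ p then x s else -x s

/-- The sphere `𝕊 = {x_q ∈ span(v_{p+1},…,v_m) : x_q² = -1}`, in coordinates. -/
def Sph (v : ℕ → A) (m p : ℕ) : Set (Fin (m + 1) → ℝ) :=
  {w | (∀ s : Fin (m + 1), (s : ℕ) ≤ p → w s = 0) ∧ emb v m w * emb v m w = -1}

/-- The point `x_p + r ω` of `M ≅ ℝ^{m+1}`. -/
def pt (m p : ℕ) (w : Fin (m + 1) → ℝ) (y : Fin (p + 1) → ℝ) (r : ℝ) :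
    Fin (m + 1) → ℝ :=
  injP m p y + r • w

/-- The slice `Ω_ω ⊆ ℝ^{p+2}` of `Ω` at `ω`. -/
def sliceSet (m p : ℕ) (Ω : Set (Fin (m + 1) → ℝ)) (w : Fin (m + 1) → ℝ) :
    Set ((Fin (p + 1) → ℝ) × ℝ) := {z | pt m p w z.1 z.2 ∈ Ω}

/-- The restriction `f_ω` of `f` to the slice at `ω`, as a function on `ℝ^{p+2}`. -/
def sliceFun (m p : ℕ) (f : (Fin (m + 1) → ℝ) → A) (w : Fin (m + 1) → ℝ) :
    (Fin (p + 1) → ℝ) × ℝ → A := fun z => f (pt m p w z.1 z.2)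

/-- Partial derivative `∂_{x_s}` of a function on `ℝ^{m+1}`. -/
noncomputable def pdF (m : ℕ) (s : Fin (m + 1)) (f : (Fin (m + 1) → ℝ) → A)
    (x : Fin (m + 1) → ℝ) : A := fderiv ℝ f x (Pi.single s 1)

/-- Partial derivative `∂_{x_s}` of a function on `ℝ^{p+1}`. -/
noncomputable def pdP (p : ℕ) (s : Fin (p + 1)) (g : (Fin (p + 1) → ℝ) → A)
    (y : Fin (p + 1) → ℝ) : A := fderiv ℝ g y (Pi.single s 1)

/-- Partial derivative `∂_{x_s}` of a function on `ℝ^{p+2} = ℝ^{p+1} × ℝ`. -/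
noncomputable def pdSx (p : ℕ) (s : Fin (p + 1)) (G : (Fin (p + 1) → ℝ) × ℝ → A)
    (z : (Fin (p + 1) → ℝ) × ℝ) : A := fderiv ℝ G z (Pi.single s 1, 0)

/-- Partial derivative `∂_r` of a function on `ℝ^{p+2} = ℝ^{p+1} × ℝ`. -/
noncomputable def pdSr (p : ℕ) (G : (Fin (p + 1) → ℝ) × ℝ → A)
    (z : (Fin (p + 1) → ℝ) × ℝ) : A := fderiv ℝ G z (0, 1)

/-- Second partial derivative `∂_r²`. -/
noncomputable def pdSr2 (p : ℕ) (G : (Fin (p + 1) → ℝ) × ℝ → A)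
    (z : (Fin (p + 1) → ℝ) × ℝ) : A := pdSr p (pdSr p G) z

/-- The operator `Σ_{lo ≤ s ≤ hi} v_s ∂_{x_s}` on functions on `ℝ^{m+1}`.
`Dop v m 0 p` is `D_{x_p}`, `Dop v m (p+1) m` is `D_{x_q}`, `Dop v m 0 m` is `D_x`. -/
noncomputable def Dop (v : ℕ → A) (m lo hi : ℕ) (f : (Fin (m + 1) → ℝ) → A)
    (x : Fin (m + 1) → ℝ) : A :=
  ∑ s : Fin (m + 1), if lo ≤ (s : ℕ) ∧ (s : ℕ) ≤ hi then v (s : ℕ) * pdF m s f x else 0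

/-- The conjugate operator `∂_{x_0} - Σ_{1 ≤ s ≤ hi} v_s ∂_{x_s}` on functions on
`ℝ^{m+1}`; `Dbarop v m p` is `D̄_{x_p}`, `Dbarop v m m` is `D̄_x`. -/
noncomputable def Dbarop (v : ℕ → A) (m hi : ℕ) (f : (Fin (m + 1) → ℝ) → A)
    (x : Fin (m + 1) → ℝ) : A :=
  pdF m 0 f x -
    ∑ s : Fin (m + 1), if 1 ≤ (s : ℕ) ∧ (s : ℕ) ≤ hi then v (s : ℕ) * pdF m s f x else 0

/-- The operator `D_{x_p} = Σ_{s=0}^p v_s ∂_{x_s}` on functions on `ℝ^{p+1}`. -/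
noncomputable def DopP (v : ℕ → A) (p : ℕ) (g : (Fin (p + 1) → ℝ) → A)
    (y : Fin (p + 1) → ℝ) : A :=
  ∑ s : Fin (p + 1), v (s : ℕ) * pdP p s g y

/-- The operator `D̄_{x_p} = ∂_{x_0} - Σ_{s=1}^p v_s ∂_{x_s}` on functions on `ℝ^{p+1}`. -/
noncomputable def DbaropP (v : ℕ → A) (p : ℕ) (g : (Fin (p + 1) → ℝ) → A)
    (y : Fin (p + 1) → ℝ) : A :=
  pdP p 0 g y - ∑ s : Fin (p + 1), if 1 ≤ (s : ℕ) then v (s : ℕ) * pdP p s g y else 0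

/-- The operator `D_{x_p}` on functions on `ℝ^{p+2} = ℝ^{p+1} × ℝ`. -/
noncomputable def DopSx (v : ℕ → A) (p : ℕ) (G : (Fin (p + 1) → ℝ) × ℝ → A)
    (z : (Fin (p + 1) → ℝ) × ℝ) : A :=
  ∑ s : Fin (p + 1), v (s : ℕ) * pdSx p s G z

/-- The operator `D̄_{x_p}` on functions on `ℝ^{p+2} = ℝ^{p+1} × ℝ`. -/
noncomputable def DbaropSx (v : ℕ → A) (p : ℕ) (G : (Fin (p + 1) → ℝ) × ℝ → A)
    (z : (Fin (p + 1) → ℝ) × ℝ) : A :=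
  pdSx p 0 G z - ∑ s : Fin (p + 1), if 1 ≤ (s : ℕ) then v (s : ℕ) * pdSx p s G z else 0

/-- The Laplacian `Δ_x` on functions on `ℝ^{m+1}`. -/
noncomputable def lapF (m : ℕ) (f : (Fin (m + 1) → ℝ) → A)
    (x : Fin (m + 1) → ℝ) : A :=
  ∑ s : Fin (m + 1), pdF m s (pdF m s f) x

/-- The Laplacian `Δ_{x_p}` on functions on `ℝ^{p+1}`. -/
noncomputable def lapP (p : ℕ) (g : (Fin (p + 1) → ℝ) → A)
    (y : Fin (p + 1) → ℝ) : A :=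
  ∑ s : Fin (p + 1), pdP p s (pdP p s g) y

/-- Iterated Laplacian `Δ_x^k`. -/
noncomputable def lapIterF (m k : ℕ) (f : (Fin (m + 1) → ℝ) → A) :
    (Fin (m + 1) → ℝ) → A :=
  (fun g => lapF m g)^[k] f

/-- Iterated Laplacian `Δ_{x_p}^k`. -/
noncomputable def lapIterP (p k : ℕ) (g : (Fin (p + 1) → ℝ) → A) :
    (Fin (p + 1) → ℝ) → A :=
  (fun h => lapP p h)^[k] g

/-- The Laplacian `Δ_{x'} = Δ_{x_p} + ∂_r²` on functions on `ℝ^{p+2}`. -/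
noncomputable def lapSx (p : ℕ) (G : (Fin (p + 1) → ℝ) × ℝ → A)
    (z : (Fin (p + 1) → ℝ) × ℝ) : A :=
  (∑ s : Fin (p + 1), pdSx p s (pdSx p s G) z) + pdSr2 p G z

/-- The slice Cauchy-Riemann operator `D_ω = D_{x_p} + ω ∂_r` applied to a function
on `ℝ^{p+2}`, where `ω` is given in coordinates by `w`. -/
noncomputable def DomCR (v : ℕ → A) (m p : ℕ) (w : Fin (m + 1) → ℝ)
    (G : (Fin (p + 1) → ℝ) × ℝ → A) (z : (Fin (p + 1) → ℝ) × ℝ) : A :=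
  DopSx v p G z + emb v m w * pdSr p G z

/-- `f` is left generalized partial-slice monogenic (of type `(p, m-p)`) on `Ω`. -/
def GSM (v : ℕ → A) (m p : ℕ) (f : (Fin (m + 1) → ℝ) → A)
    (Ω : Set (Fin (m + 1) → ℝ)) : Prop :=
  ∀ w ∈ Sph v m p, ContDiffOn ℝ 1 (sliceFun m p f w) (sliceSet m p Ω w) ∧
    ∀ z ∈ sliceSet m p Ω w, DomCR v m p w (sliceFun m p f w) z = 0

/-- `Ω` is partially symmetric with respect to `ℝ^{p+1}`. -/
def PSym (v : ℕ → A) (m p : ℕ) (Ω : Set (Fin (m + 1) → ℝ)) : Prop :=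
  ∀ x ∈ Ω, ∀ w ∈ Sph v m p, xppart m p x + rad m p x • w ∈ Ω

/-- `Ω` is a slice domain: a domain meeting `ℝ^{p+1}` all of whose slices are
domains in `ℝ^{p+2}`. -/
def SliceDomain (v : ℕ → A) (m p : ℕ) (Ω : Set (Fin (m + 1) → ℝ)) : Prop :=
  IsOpen Ω ∧ IsConnected Ω ∧ (∃ x ∈ Ω, xqpart m p x = 0) ∧
    ∀ w ∈ Sph v m p, IsConnected (sliceSet m p Ω w)

/-- The reflection `(x_p, r) ↦ (x_p, -r)` of `ℝ^{p+2}`. -/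
def reflD (p : ℕ) (z : (Fin (p + 1) → ℝ) × ℝ) : (Fin (p + 1) → ℝ) × ℝ := (z.1, -z.2)

/-- The p-symmetric completion `Ω_D ⊆ M` of `D ⊆ ℝ^{p+2}`. -/
def OmegaD (v : ℕ → A) (m p : ℕ) (D : Set ((Fin (p + 1) → ℝ) × ℝ)) :
    Set (Fin (m + 1) → ℝ) :=
  {x | ∃ w ∈ Sph v m p, ∃ z ∈ D, x = pt m p w z.1 z.2}

/-- `(F₁, F₂)` satisfies the even-odd (stem function) conditions on `D`. -/
def IsStem (p : ℕ) (D : Set ((Fin (p + 1) → ℝ) × ℝ))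
    (F₁ F₂ : (Fin (p + 1) → ℝ) × ℝ → A) : Prop :=
  ∀ z ∈ D, F₁ (reflD p z) = F₁ z ∧ F₂ (reflD p z) = -F₂ z

/-- `f` is the generalized partial-slice function induced by the stem `(F₁, F₂)`:
`f(x_p + rω) = F₁(x_p, r) + ω F₂(x_p, r)`. -/
def Induced (v : ℕ → A) (m p : ℕ) (D : Set ((Fin (p + 1) → ℝ) × ℝ))
    (F₁ F₂ : (Fin (p + 1) → ℝ) × ℝ → A) (f : (Fin (m + 1) → ℝ) → A) : Prop :=
  ∀ w ∈ Sph v m p, ∀ z ∈ D, f (pt m p w z.1 z.2) = F₁ z + emb v m w * F₂ z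

/-- The generalized Cauchy-Riemann system for the stem `(F₁, F₂)` on `D`. -/
def StemCR (v : ℕ → A) (p : ℕ) (D : Set ((Fin (p + 1) → ℝ) × ℝ))
    (F₁ F₂ : (Fin (p + 1) → ℝ) × ℝ → A) : Prop :=
  ∀ z ∈ D, DopSx v p F₁ z - pdSr p F₂ z = 0 ∧ DbaropSx v p F₂ z + pdSr p F₁ z = 0

/-- `f` is generalized partial-slice regular on `Ω_D`. -/
def MemGSR (v : ℕ → A) (m p : ℕ) (D : Set ((Fin (p + 1) → ℝ) × ℝ))
    (f : (Fin (m + 1) → ℝ) → A) : Prop :=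
  ∃ F₁ F₂ : (Fin (p + 1) → ℝ) × ℝ → A, IsStem p D F₁ F₂ ∧
    ContDiffOn ℝ 1 F₁ D ∧ ContDiffOn ℝ 1 F₂ D ∧
    Induced v m p D F₁ F₂ f ∧ StemCR v p D F₁ F₂

/-- `f` is a generalized partial-slice function on `Ω`. -/
def MemGS (v : ℕ → A) (m p : ℕ) (Ω : Set (Fin (m + 1) → ℝ))
    (f : (Fin (m + 1) → ℝ) → A) : Prop :=
  ∃ F₁ F₂ : (Fin (p + 1) → ℝ) × ℝ → A,
    (∀ z : (Fin (p + 1) → ℝ) × ℝ, F₁ (reflD p z) = F₁ z ∧ F₂ (reflD p z) = -F₂ z) ∧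
    ∀ x ∈ Ω, f x = F₁ (projP m p x, rad m p x) +
      emb v m (normq m p x) * F₂ (projP m p x, rad m p x)

/-- Non-associative power: `a^n` with products taken from the right. -/
def apow (a : A) (n : ℕ) : A := (fun b => a * b)^[n] 1

/-- Partial even part `PE[f](x) = (f(x) + f(x_⋄))/2`. -/
noncomputable def PE (m p : ℕ) (f : (Fin (m + 1) → ℝ) → A)
    (x : Fin (m + 1) → ℝ) : A := (2 : ℝ)⁻¹ • (f x + f (reflP m p x))

/-- Partial odd part `PO[f](x) = (f(x) - f(x_⋄))/2`. -/
noncomputable def PO (m p : ℕ) (f : (Fin (m + 1) → ℝ) → A)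
    (x : Fin (m + 1) → ℝ) : A := (2 : ℝ)⁻¹ • (f x - f (reflP m p x))

/-- `Ω₀* = {x_p + x_q : x_p ∈ Ω₀, x_q ∈ ℝ^q}`. -/
def Omega0star (m p : ℕ) (Ω₀ : Set (Fin (p + 1) → ℝ)) : Set (Fin (m + 1) → ℝ) :=
  {x | projP m p x ∈ Ω₀}

/-- The spherical derivative `f'_s(x) = (1/2) x_q⁻¹ (f(x) - f(x_⋄))`
(using `x_q⁻¹ = -x_q/|x_q|²`). -/
noncomputable def sder (v : ℕ → A) (m p : ℕ) (f : (Fin (m + 1) → ℝ) → A)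
    (x : Fin (m + 1) → ℝ) : A :=
  -(((2 : ℝ) * rad m p x ^ 2)⁻¹) • (emb v m (xqpart m p x) * (f x - f (reflP m p x)))

/-- The spherical Dirac operator
`Γ f = -(1/2) Σ_{p+1 ≤ i,j ≤ m} v_i (v_j (L_{ij} f))`. -/
noncomputable def sphericalGamma (v : ℕ → A) (m p : ℕ) (f : (Fin (m + 1) → ℝ) → A)
    (x : Fin (m + 1) → ℝ) : A :=
  -((2 : ℝ)⁻¹) • ∑ i : Fin (m + 1), ∑ j : Fin (m + 1),
    if p < (i : ℕ) ∧ p < (j : ℕ) then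
      v (i : ℕ) * (v (j : ℕ) * (x i • pdF m j f x - x j • pdF m i f x)) else 0

/-- The slice Cauchy-Riemann operator `D_ω` applied to (the slice restriction of) a
function `f` on `M`, at the point `x` (with `ω = x_q/|x_q|`). -/
noncomputable def DomCRat (v : ℕ → A) (m p : ℕ) (f : (Fin (m + 1) → ℝ) → A)
    (x : Fin (m + 1) → ℝ) : A :=
  DomCR v m p (normq m p x) (sliceFun m p f (normq m p x)) (projP m p x, rad m p x)

/-- `f` is left monogenic on `Ω`: `f ∈ C¹` and `D_x f = 0`. -/
def Monogenic (v : ℕ → A) (m : ℕ) (f : (Fin (m + 1) → ℝ) → A)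
    (Ω : Set (Fin (m + 1) → ℝ)) : Prop :=
  ContDiffOn ℝ 1 f Ω ∧ ∀ x ∈ Ω, Dop v m 0 m f x = 0

/-- `f` is harmonic on `Ω`: `f ∈ C²` and `Δ_x f = 0`. -/
def Harmonic (m : ℕ) (f : (Fin (m + 1) → ℝ) → A)
    (Ω : Set (Fin (m + 1) → ℝ)) : Prop :=
  ContDiffOn ℝ 2 f Ω ∧ ∀ x ∈ Ω, lapF m f x = 0

/-- A family of functions converges normally (locally a summable uniform bound). -/
def NormallyConvOn {E F : Type*} [TopologicalSpace E] [NormedAddCommGroup F]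
    (u : ℕ → E → F) (s : Set E) : Prop :=
  ∀ x ∈ s, ∃ U ∈ nhds x, ∃ c : ℕ → ℝ, Summable c ∧ ∀ k : ℕ, ∀ y ∈ U, ‖u k y‖ ≤ c k

/-- The generalized partial-slice CK-extension
`CK[f₀](x) = Σ_k (r^{2k}/(2k)!)(-Δ_{x_p})^k f₀(x_p)
  + ω Σ_k (r^{2k+1}/(2k+1)!)(-Δ_{x_p})^k (D_{x_p} f₀)(x_p)`. -/
noncomputable def CKe (v : ℕ → A) (m p : ℕ) (f₀ : (Fin (p + 1) → ℝ) → A)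
    (x : Fin (m + 1) → ℝ) : A :=
  (∑' k : ℕ, (((-1 : ℝ) ^ k * rad m p x ^ (2 * k)) / (2 * k).factorial) •
      lapIterP p k f₀ (projP m p x)) +
  emb v m (normq m p x) *
    ∑' k : ℕ, (((-1 : ℝ) ^ k * rad m p x ^ (2 * k + 1)) / (2 * k + 1).factorial) •
      lapIterP p k (DopP v p f₀) (projP m p x)

/-- The coefficient `Γ(q/2)(-1)^k r^{2k} / (2^{2k} k! Γ(k + q/2))`. -/
noncomputable def hgckC (q k : ℕ) (r : ℝ) : ℝ :=
  (Real.Gamma ((q : ℝ) / 2) * (-1) ^ k * r ^ (2 * k)) /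
    (2 ^ (2 * k) * (k.factorial : ℝ) * Real.Gamma ((k : ℝ) + (q : ℝ) / 2))

/-- The coefficient `Γ(q/2)(-1)^k r^{2k} / (2^{2k+1} k! Γ(k + q/2 + 1))`. -/
noncomputable def gckC' (q k : ℕ) (r : ℝ) : ℝ :=
  (Real.Gamma ((q : ℝ) / 2) * (-1) ^ k * r ^ (2 * k)) /
    (2 ^ (2 * k + 1) * (k.factorial : ℝ) * Real.Gamma ((k : ℝ) + (q : ℝ) / 2 + 1))

/-- The coefficient `Γ(q/2 + 1)(-1)^k r^{2k} / (2^{2k} k! Γ(k + q/2 + 1))`. -/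
noncomputable def hgckC' (q k : ℕ) (r : ℝ) : ℝ :=
  (Real.Gamma ((q : ℝ) / 2 + 1) * (-1) ^ k * r ^ (2 * k)) /
    (2 ^ (2 * k) * (k.factorial : ℝ) * Real.Gamma ((k : ℝ) + (q : ℝ) / 2 + 1))

/-- The monogenic generalized CK-extension `GCK[A₀]`. -/
noncomputable def GCKe (v : ℕ → A) (m p : ℕ) (A₀ : (Fin (p + 1) → ℝ) → A)
    (x : Fin (m + 1) → ℝ) : A :=
  (∑' k : ℕ, hgckC (m - p) k (rad m p x) • lapIterP p k A₀ (projP m p x)) +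
  emb v m (xqpart m p x) *
    ∑' k : ℕ, gckC' (m - p) k (rad m p x) • lapIterP p k (DopP v p A₀) (projP m p x)

/-- The harmonic generalized CK-extension `HGCK[A₀, A₁]`. -/
noncomputable def HGCKe (v : ℕ → A) (m p : ℕ) (A₀ A₁ : (Fin (p + 1) → ℝ) → A)
    (x : Fin (m + 1) → ℝ) : A :=
  (∑' k : ℕ, hgckC (m - p) k (rad m p x) • lapIterP p k A₀ (projP m p x)) +
  emb v m (xqpart m p x) *
    ∑' k : ℕ, hgckC' (m - p) k (rad m p x) • lapIterP p k A₁ (projP m p x)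

/-- The operator `(1/r)∂_r`, extended to `r = 0` by its limit `∂_r²` (on even
functions). -/
noncomputable def T1 (p : ℕ) (G : (Fin (p + 1) → ℝ) × ℝ → A) :
    (Fin (p + 1) → ℝ) × ℝ → A := fun z =>
  if z.2 = 0 then pdSr2 p G z else (z.2)⁻¹ • pdSr p G z

/-- The operator `∂_r ∘ (1/r)`, extended to `r = 0` by its limit `(1/2)∂_r²` (on odd
functions). -/
noncomputable def T2 (p : ℕ) (G : (Fin (p + 1) → ℝ) × ℝ → A) :
    (Fin (p + 1) → ℝ) × ℝ → A := fun z =>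
  if z.2 = 0 then (2 : ℝ)⁻¹ • pdSr2 p G z
  else fderiv ℝ (fun t : ℝ => t⁻¹ • G (z.1, t)) z.2 1

/-- `C_q(k) = (q-1)(q-3)⋯(q-2k+1)`, `C_q(0) = 1`. -/
noncomputable def cq (q k : ℕ) : ℝ :=
  ∏ i ∈ Finset.range k, ((q : ℝ) - (2 * (i : ℝ) + 1))

/-- Double factorial. -/
def dfac : ℕ → ℕ
  | 0 => 1
  | 1 => 1
  | n + 2 => (n + 2) * dfac n

/-- The Fueter-Sce constant `γ_q = (-1)^{(q-1)/2} (q-1)!!/(q-2)!!`. -/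
noncomputable def gammaQ (q : ℕ) : ℝ :=
  (-1 : ℝ) ^ ((q - 1) / 2) * (dfac (q - 1) : ℝ) / (dfac (q - 2) : ℝ)


section CKAux

variable {conj : A → A}

/-! ### Elementary algebraic consequences of the axioms -/

theorem zmul (H : IsAltStarAlg A conj) (b : A) : (0 : A) * b = 0 := by
  have h := H.smul_mul' 0 (1 : A) b
  simpa using h

theorem mulz (H : IsAltStarAlg A conj) (a : A) : a * (0 : A) = 0 := by
  have h := H.mul_smul' 0 a (1 : A)
  simpa using h

theorem negmul (H : IsAltStarAlg A conj) (a b : A) : (-a) * b = -(a * b) := by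
  have h := H.smul_mul' (-1) a b
  simpa [neg_smul, one_smul] using h

theorem mulneg (H : IsAltStarAlg A conj) (a b : A) : a * (-b) = -(a * b) := by
  have h := H.mul_smul' (-1) a b
  simpa [neg_smul, one_smul] using h

theorem mulsub (H : IsAltStarAlg A conj) (a b c : A) : a * (b - c) = a * b - a * c := by
  rw [sub_eq_add_neg, H.mul_add', mulneg H, sub_eq_add_neg]

theorem summul (H : IsAltStarAlg A conj) {ι : Type*} (s : Finset ι) (f : ι → A) (b : A) :
    (∑ i ∈ s, f i) * b = ∑ i ∈ s, f i * b := by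
  induction s using Finset.cons_induction with
  | empty => simpa using zmul H b
  | cons a s ha ih => rw [Finset.sum_cons, Finset.sum_cons, H.add_mul', ih]

theorem mulsum (H : IsAltStarAlg A conj) {ι : Type*} (s : Finset ι) (a : A) (f : ι → A) :
    a * (∑ i ∈ s, f i) = ∑ i ∈ s, a * f i := by
  induction s using Finset.cons_induction with
  | empty => simpa using mulz H a
  | cons i s hi ih => rw [Finset.sum_cons, Finset.sum_cons, H.mul_add', ih]

theorem vsq (H : IsAltStarAlg A conj) {v : ℕ → A} {m : ℕ} (hv : IsHypBasis A conj v m)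
    (s : ℕ) (h1 : 1 ≤ s) (h2 : s ≤ m) : v s * v s = -1 := by
  have hc : conj (v s) = -(v s) := eq_neg_of_add_eq_zero_right (hv.trace_zero s h1 h2)
  have h3 := hv.norm_one s h1 h2
  rw [hc, mulneg H] at h3
  exact neg_eq_iff_eq_neg.mp h3

theorem linearize (H : IsAltStarAlg A conj) (u w b : A) :
    u * (w * b) + w * (u * b) = (u * w + w * u) * b := by
  have h := H.alt_left (u + w) b
  rw [H.add_mul' u w b] at h
  rw [H.mul_add', H.add_mul', H.add_mul'] at h
  -- h : (u * (u*b) + w * (u*b)) + (u * (w*b) + w * (w*b)) = ((u+w)*(u+w)) * b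
  rw [H.mul_add' (u + w) u w, H.add_mul' u w u, H.add_mul' u w w, H.add_mul', H.add_mul',
    H.add_mul'] at h
  rw [H.alt_left u b, H.alt_left w b] at h
  have h2 : (u * (w * b) + w * (u * b)) - (u * w * b + w * u * b) =
      ((u * u * b + w * (u * b)) + (u * (w * b) + w * w * b)) -
        ((u * u * b + w * u * b) + (u * w * b + w * w * b)) := by abel
  rw [h, sub_self] at h2
  rw [H.add_mul']
  exact sub_eq_zero.mp h2

/-! ### The embedded vector `x_q` and its square -/

theorem embq_expand (v : ℕ → A) (m p : ℕ) (x : Fin (m + 1) → ℝ) :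
    emb v m (xqpart m p x) =
      ∑ t : Fin (m + 1), if p < (t : ℕ) then x t • v (t : ℕ) else 0 := by
  unfold emb xqpart
  refine Finset.sum_congr rfl fun t _ => ?_
  by_cases h : (t : ℕ) ≤ p
  · simp [h, Nat.not_lt.mpr h]
  · simp [h, Nat.lt_of_not_le h]

theorem emb_mul (H : IsAltStarAlg A conj) (v : ℕ → A) (m p : ℕ) (x : Fin (m + 1) → ℝ)
    (b : A) :
    emb v m (xqpart m p x) * b =
      ∑ t : Fin (m + 1), if p < (t : ℕ) then x t • (v (t : ℕ) * b) else 0 := by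
  rw [embq_expand, summul H]
  refine Finset.sum_congr rfl fun t _ => ?_
  by_cases h : p < (t : ℕ)
  · simp only [if_pos h, H.smul_mul']
  · simp only [if_neg h, zmul H]

theorem emb_sq (H : IsAltStarAlg A conj) {v : ℕ → A} {m : ℕ} (hv : IsHypBasis A conj v m)
    (p : ℕ) (w : Fin (m + 1) → ℝ) (hw : ∀ t : Fin (m + 1), (t : ℕ) ≤ p → w t = 0) :
    emb v m w * emb v m w = (-(∑ t : Fin (m + 1), w t ^ 2)) • (1 : A) := by
  classical
  have expand : emb v m w * emb v m w =
      ∑ s : Fin (m + 1), ∑ t : Fin (m + 1), (w s * w t) • (v (s : ℕ) * v (t : ℕ)) := by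
    unfold emb
    rw [summul H]
    refine Finset.sum_congr rfl fun s _ => ?_
    rw [H.smul_mul', mulsum H, Finset.smul_sum]
    refine Finset.sum_congr rfl fun t _ => ?_
    rw [H.mul_smul', smul_smul]
  set F : Fin (m + 1) → Fin (m + 1) → A :=
    fun s t => (w s * w t) • (v (s : ℕ) * v (t : ℕ)) with hF
  have skew : ∀ s t : Fin (m + 1), s ≠ t → F s t = -F t s := by
    intro s t hst
    by_cases hs : (s : ℕ) ≤ p
    · simp [hF, hw s hs]
    · by_cases ht : (t : ℕ) ≤ p
      · simp [hF, hw t ht]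
      · have hs1 : 1 ≤ (s : ℕ) := by omega
        have ht1 : 1 ≤ (t : ℕ) := by omega
        have hsm : (s : ℕ) ≤ m := by have := s.isLt; omega
        have htm : (t : ℕ) ≤ m := by have := t.isLt; omega
        have hne : (s : ℕ) ≠ (t : ℕ) := fun h => hst (Fin.ext h)
        simp only [hF]
        rw [hv.anticomm _ _ hs1 hsm ht1 htm hne, smul_neg, mul_comm (w s) (w t)]
  have diag : ∀ s : Fin (m + 1), F s s = (-(w s ^ 2)) • (1 : A) := by
    intro s
    by_cases hs : (s : ℕ) ≤ p
    · simp [hF, hw s hs]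
    · have hs1 : 1 ≤ (s : ℕ) := by omega
      have hsm : (s : ℕ) ≤ m := by have := s.isLt; omega
      simp only [hF]
      rw [vsq H hv _ hs1 hsm, smul_neg, ← neg_smul, ← sq]
  have split : ∀ s : Fin (m + 1),
      (∑ t : Fin (m + 1), F s t) = F s s + ∑ t : Fin (m + 1), if t = s then 0 else F s t := by
    intro s
    have : ∀ t : Fin (m + 1),
        F s t = (if t = s then F s t else 0) + (if t = s then 0 else F s t) := by
      intro t; by_cases h : t = s <;> simp [h]
    rw [Finset.sum_congr rfl fun t _ => this t, Finset.sum_add_distrib,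
      Finset.sum_ite_eq' Finset.univ s (fun t => F s t)]
    simp
  have Tzero : (∑ s : Fin (m + 1), ∑ t : Fin (m + 1), if t = s then 0 else F s t) = 0 := by
    set T := ∑ s : Fin (m + 1), ∑ t : Fin (m + 1), if t = s then 0 else F s t with hT
    have hTT : T = -T := by
      calc T = ∑ t : Fin (m + 1), ∑ s : Fin (m + 1), if t = s then 0 else F s t :=
            Finset.sum_comm
        _ = ∑ s : Fin (m + 1), ∑ t : Fin (m + 1), if s = t then 0 else F t s := rfl
        _ = ∑ s : Fin (m + 1), ∑ t : Fin (m + 1), -(if t = s then 0 else F s t) := by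
            refine Finset.sum_congr rfl fun s _ => Finset.sum_congr rfl fun t _ => ?_
            by_cases h : s = t
            · simp [h]
            · rw [if_neg h, if_neg (Ne.symm h), skew t s (Ne.symm h)]
        _ = -T := by rw [hT]; simp [Finset.sum_neg_distrib]
    have h2 : T + T = 0 := by nth_rewrite 1 [hTT]; exact neg_add_cancel T
    have h3 : (2 : ℝ)⁻¹ • (T + T) = T := by
      rw [← two_smul ℝ T, smul_smul]; norm_num
    rw [h2, smul_zero] at h3
    exact h3.symm
  rw [expand, Finset.sum_congr rfl fun s _ => split s, Finset.sum_add_distrib, Tzero, add_zero,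
    Finset.sum_congr rfl fun s _ => diag s, ← Finset.sum_smul, ← Finset.sum_neg_distrib]

/-! ### Powers of `x_q` -/

theorem apow_succ' (a : A) (n : ℕ) : apow a (n + 1) = a * apow a n :=
  Function.iterate_succ_apply' _ _ _

theorem apow_even_odd (H : IsAltStarAlg A conj) (a : A) (c : ℝ) (hc : a * a = c • 1)
    (k : ℕ) : apow a (2 * k) = c ^ k • 1 ∧ apow a (2 * k + 1) = c ^ k • a := by
  induction k with
  | zero =>
    constructor
    · simp [apow]
    · have : apow a 1 = a * apow a 0 := apow_succ' a 0
      simp only [apow, Function.iterate_zero, id_eq] at this ⊢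
      rw [this, H.mul_one', pow_zero, one_smul]
  | succ n ih =>
    have heven : apow a (2 * (n + 1)) = c ^ (n + 1) • 1 := by
      have e1 : 2 * (n + 1) = (2 * n + 1) + 1 := by omega
      rw [e1, apow_succ', ih.2, H.mul_smul', hc, smul_smul, ← pow_succ]
    refine ⟨heven, ?_⟩
    rw [apow_succ', heven, H.mul_smul', H.mul_one']

theorem rho_def (m p : ℕ) (x : Fin (m + 1) → ℝ) :
    (∑ t : Fin (m + 1), xqpart m p x t ^ 2) =
      ∑ t : Fin (m + 1), if p < (t : ℕ) then x t ^ 2 else 0 := by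
  refine Finset.sum_congr rfl fun t _ => ?_
  unfold xqpart
  by_cases h : (t : ℕ) ≤ p
  · simp [h, Nat.not_lt.mpr h]
  · simp [h, Nat.lt_of_not_le h]

/-- `ρ(x) = |x_q|²`. -/
noncomputable def rho (m p : ℕ) (x : Fin (m + 1) → ℝ) : ℝ :=
  ∑ t : Fin (m + 1), if p < (t : ℕ) then x t ^ 2 else 0

theorem xq_sq (H : IsAltStarAlg A conj) {v : ℕ → A} {m : ℕ} (hv : IsHypBasis A conj v m)
    (p : ℕ) (x : Fin (m + 1) → ℝ) :
    emb v m (xqpart m p x) * emb v m (xqpart m p x) = (-(rho m p x)) • (1 : A) := by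
  rw [emb_sq H hv p (xqpart m p x) fun t ht => by simp [xqpart, ht], rho_def m p x]
  rfl

theorem apow_even_mul (H : IsAltStarAlg A conj) {v : ℕ → A} {m : ℕ}
    (hv : IsHypBasis A conj v m) (p k : ℕ) (x : Fin (m + 1) → ℝ) (b : A) :
    apow (emb v m (xqpart m p x)) (2 * k) * b = (-(rho m p x)) ^ k • b := by
  rw [(apow_even_odd H _ _ (xq_sq H hv p x) k).1, H.smul_mul', H.one_mul']

theorem apow_odd_mul (H : IsAltStarAlg A conj) {v : ℕ → A} {m : ℕ}
    (hv : IsHypBasis A conj v m) (p k : ℕ) (x : Fin (m + 1) → ℝ) (b : A) :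
    apow (emb v m (xqpart m p x)) (2 * k + 1) * b =
      (-(rho m p x)) ^ k • (emb v m (xqpart m p x) * b) := by
  rw [(apow_even_odd H _ _ (xq_sq H hv p x) k).2, H.smul_mul']

/-! ### Anticommutation of `v_s` (s ≤ p) with `x_q` -/

theorem anti_swap (H : IsAltStarAlg A conj) {v : ℕ → A} {m : ℕ}
    (hv : IsHypBasis A conj v m) {p : ℕ} (hp : p < m) (s : ℕ) (h1 : 1 ≤ s) (hsp : s ≤ p)
    (x : Fin (m + 1) → ℝ) (b : A) :
    v s * (emb v m (xqpart m p x) * b) = -(emb v m (xqpart m p x) * (v s * b)) := by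
  have anti : v s * emb v m (xqpart m p x) + emb v m (xqpart m p x) * v s = 0 := by
    rw [embq_expand, mulsum H, summul H, ← Finset.sum_add_distrib]
    refine Finset.sum_eq_zero fun t _ => ?_
    by_cases ht : p < (t : ℕ)
    · simp only [if_pos ht]
      rw [H.mul_smul', H.smul_mul', ← smul_add,
        hv.anticomm s t h1 (by omega) (by omega) (by have := t.isLt; omega) (by omega)]
      simp
    · simp only [if_neg ht, mulz H, zmul H, add_zero]
  have lin := linearize H (v s) (emb v m (xqpart m p x)) b
  rw [anti, zmul H] at lin
  exact eq_neg_of_add_eq_zero_left lin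

/-! ### Calculus helpers -/

/-- Embed `Fin (p+1)` into `Fin (m+1)`. -/
def emapF {m : ℕ} (p : ℕ) (hp : p < m) (s : Fin (p + 1)) : Fin (m + 1) :=
  ⟨(s : ℕ), by have := s.isLt; omega⟩

/-- Projection `ℝ^{m+1} → ℝ^{p+1}` as a continuous linear map. -/
noncomputable def piL (m p : ℕ) (hp : p < m) :
    (Fin (m + 1) → ℝ) →L[ℝ] (Fin (p + 1) → ℝ) :=
  ContinuousLinearMap.pi fun s => ContinuousLinearMap.proj (emapF p hp s)

theorem piL_apply (m p : ℕ) (hp : p < m) (x : Fin (m + 1) → ℝ) :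
    piL m p hp x = projP m p x := by
  funext s
  have hs : (s : ℕ) < m + 1 := by have := s.isLt; omega
  simp [piL, projP, emapF, hs]

theorem piL_single_low (m p : ℕ) (hp : p < m) (s : Fin (m + 1)) (hs : (s : ℕ) ≤ p) :
    piL m p hp (Pi.single s 1) = Pi.single (⟨(s : ℕ), by omega⟩ : Fin (p + 1)) (1 : ℝ) := by
  funext t
  simp only [piL, ContinuousLinearMap.pi_apply, ContinuousLinearMap.proj_apply,
    Pi.single_apply, emapF, Fin.ext_iff]

theorem piL_single_high (m p : ℕ) (hp : p < m) (s : Fin (m + 1)) (hs : p < (s : ℕ)) :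
    piL m p hp (Pi.single s 1) = 0 := by
  funext t
  have ht : (t : ℕ) < p + 1 := t.isLt
  simp only [piL, ContinuousLinearMap.pi_apply, ContinuousLinearMap.proj_apply,
    Pi.single_apply, emapF, Fin.ext_iff, Pi.zero_apply]
  rw [if_neg (by omega)]

/-- Derivative of `ρ`. -/
noncomputable def rhoD (m p : ℕ) (x : Fin (m + 1) → ℝ) : (Fin (m + 1) → ℝ) →L[ℝ] ℝ :=
  ∑ t : Fin (m + 1), if p < (t : ℕ) then
    (2 * x t) • (ContinuousLinearMap.proj t : (Fin (m + 1) → ℝ) →L[ℝ] ℝ) else 0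

theorem rho_hasFDeriv (m p : ℕ) (x : Fin (m + 1) → ℝ) :
    HasFDerivAt (rho m p) (rhoD m p x) x := by
  unfold rho rhoD
  apply HasFDerivAt.fun_sum
  intro t _
  by_cases h : p < (t : ℕ)
  · simp only [if_pos h]
    have h1 : HasFDerivAt (fun x : Fin (m + 1) → ℝ => x t)
        (ContinuousLinearMap.proj t : (Fin (m + 1) → ℝ) →L[ℝ] ℝ) x := by
      exact (ContinuousLinearMap.proj t : (Fin (m + 1) → ℝ) →L[ℝ] ℝ).hasFDerivAt
    have h2 := (hasDerivAt_pow 2 (x t)).comp_hasFDerivAt x h1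
    simpa [Function.comp_def] using h2
  · simp only [if_neg h]
    exact hasFDerivAt_const 0 x

theorem rhoD_single (m p : ℕ) (x : Fin (m + 1) → ℝ) (s : Fin (m + 1)) :
    rhoD m p x (Pi.single s 1) = if p < (s : ℕ) then 2 * x s else 0 := by
  unfold rhoD
  rw [ContinuousLinearMap.sum_apply]
  rw [Finset.sum_eq_single s]
  · by_cases h : p < (s : ℕ) <;>
      simp [h, ContinuousLinearMap.proj_apply, Pi.single_eq_same]
  · intro t _ hts
    by_cases h : p < (t : ℕ) <;>
      simp [h, ContinuousLinearMap.proj_apply, Pi.single_eq_of_ne hts]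
  · simp

/-- Left multiplication by a fixed element, as a continuous linear map. -/
noncomputable def mulL (H : IsAltStarAlg A conj) (a : A) : A →L[ℝ] A := by
  letI := H.finDim
  exact LinearMap.toContinuousLinearMap
    { toFun := fun b => a * b
      map_add' := H.mul_add' a
      map_smul' := fun r b => by simpa using H.mul_smul' r a b }

theorem mulL_apply (H : IsAltStarAlg A conj) (a b : A) : mulL H a b = a * b := rfl

/-! ### Reindexing sums -/

theorem sum_low {β : Type*} [AddCommMonoid β] {m : ℕ} (p : ℕ) (hp : p < m)
    (F : Fin (m + 1) → β) :
    (∑ s : Fin (m + 1), if (s : ℕ) ≤ p then F s else 0) =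
      ∑ s' : Fin (p + 1), F (emapF p hp s') := by
  classical
  rw [← Finset.sum_filter]
  refine Finset.sum_bij' (i := fun (s : Fin (m + 1)) hs =>
      (⟨(s : ℕ), by simp only [Finset.mem_filter] at hs; omega⟩ : Fin (p + 1)))
    (j := fun s' _ => emapF p hp s') ?_ ?_ ?_ ?_ ?_
  · intro a ha; exact Finset.mem_univ _
  · intro a ha
    simp only [Finset.mem_filter, Finset.mem_univ, true_and, emapF]
    have := a.isLt; omega
  · intro a ha; exact Fin.ext rfl
  · intro a ha; exact Fin.ext rfl
  · intro a ha; exact congrArg F (Fin.ext rfl)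

theorem card_high (m p : ℕ) :
    (∑ s : Fin (m + 1), if p < (s : ℕ) then (1 : ℕ) else 0) = m - p := by
  rw [Fin.sum_univ_eq_sum_range (fun i => if p < i then (1 : ℕ) else 0) (m + 1)]
  have : ∀ n : ℕ, (∑ i ∈ Finset.range n, if p < i then (1 : ℕ) else 0) = n - (p + 1) := by
    intro n
    induction n with
    | zero => simp
    | succ n ih =>
      rw [Finset.sum_range_succ, ih]
      by_cases h : p < n
      · rw [if_pos h]; omega
      · rw [if_neg h]; omega
  rw [this]; omega

end CKAux

/-- The four derivation formulas for `x_q`-powers times a function of `x_p`: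
(i) `D_{x_p}(x_q^{2k} g) = x_q^{2k}(D_{x_p} g)`;
(ii) `D_{x_p}(x_q^{2k+1} g) = x_q^{2k+1}(D̄_{x_p} g)`;
(iii) `D_{x_q}(x_q^{2k} g) = -2k x_q^{2k-1} g`;
(iv) `D_{x_q}(x_q^{2k+1} g) = -(2k+q) x_q^{2k} g`. -/
theorem ck_four_formulas
    {A : Type*} [NormedAddCommGroup A] [NormedSpace ℝ A] [Mul A] [One A]
    (conj : A → A) (H : IsAltStarAlg A conj)
    (v : ℕ → A) (m p : ℕ) (hv : IsHypBasis A conj v m) (hp : p < m)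
    (g : (Fin (p + 1) → ℝ) → A) (hg : ContDiff ℝ 1 g) (k : ℕ) :
    (∀ x : Fin (m + 1) → ℝ,
      Dop v m 0 p
          (fun x' => apow (emb v m (xqpart m p x')) (2 * k) * g (projP m p x')) x =
        apow (emb v m (xqpart m p x)) (2 * k) * DopP v p g (projP m p x)) ∧
    (∀ x : Fin (m + 1) → ℝ,
      Dop v m 0 p
          (fun x' => apow (emb v m (xqpart m p x')) (2 * k + 1) * g (projP m p x')) x =
        apow (emb v m (xqpart m p x)) (2 * k + 1) * DbaropP v p g (projP m p x)) ∧
    (∀ x : Fin (m + 1) → ℝ,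
      Dop v m (p + 1) m
          (fun x' => apow (emb v m (xqpart m p x')) (2 * k) * g (projP m p x')) x =
        -((2 * k : ℝ)) •
          (apow (emb v m (xqpart m p x)) (2 * k - 1) * g (projP m p x))) ∧
    (∀ x : Fin (m + 1) → ℝ,
      Dop v m (p + 1) m
          (fun x' => apow (emb v m (xqpart m p x')) (2 * k + 1) * g (projP m p x')) x =
        -((2 * k : ℝ) + ((m - p : ℕ) : ℝ)) •
          (apow (emb v m (xqpart m p x)) (2 * k) * g (projP m p x))) := by
  classical
  have hg' : Differentiable ℝ g := hg.differentiable one_ne_zero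
  -- derivative of g ∘ projP
  have hGder : ∀ x : Fin (m + 1) → ℝ,
      HasFDerivAt (fun x' => g (projP m p x'))
        ((fderiv ℝ g (projP m p x)).comp (piL m p hp)) x := by
    intro x
    have h1 := ((hg' (piL m p hp x)).hasFDerivAt).comp x (piL m p hp).hasFDerivAt
    rw [piL_apply] at h1
    simpa [Function.comp_def, piL_apply] using h1
  -- derivative of (-ρ)^k
  have hcder : ∀ x : Fin (m + 1) → ℝ,
      HasFDerivAt (fun x' => (-(rho m p x')) ^ k)
        (((k : ℝ) * (-(rho m p x)) ^ (k - 1)) • (-(rhoD m p x))) x := by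
    intro x
    have h1 : HasFDerivAt (fun x' => -(rho m p x')) (-(rhoD m p x)) x :=
      (rho_hasFDeriv m p x).neg
    have h2 := (hasDerivAt_pow k (-(rho m p x))).comp_hasFDerivAt x h1
    simpa [Function.comp_def] using h2
  -- derivative of the even auxiliary function
  have hFEder : ∀ x : Fin (m + 1) → ℝ,
      HasFDerivAt (fun x' => (-(rho m p x')) ^ k • g (projP m p x'))
        ((-(rho m p x)) ^ k • ((fderiv ℝ g (projP m p x)).comp (piL m p hp)) +
          (((k : ℝ) * (-(rho m p x)) ^ (k - 1)) • (-(rhoD m p x))).smulRight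
            (g (projP m p x))) x :=
    fun x => (hcder x).smul (hGder x)
  -- pdF of the even function, low direction
  have pdFE_low : ∀ (x : Fin (m + 1) → ℝ) (s : Fin (m + 1)) (hs : (s : ℕ) ≤ p),
      pdF m s (fun x' => (-(rho m p x')) ^ k • g (projP m p x')) x =
        (-(rho m p x)) ^ k • pdP p (⟨(s : ℕ), by omega⟩ : Fin (p + 1)) g (projP m p x) := by
    intro x s hs
    simp only [pdF]
    rw [(hFEder x).fderiv]
    rw [ContinuousLinearMap.add_apply, ContinuousLinearMap.smul_apply,
      ContinuousLinearMap.comp_apply, ContinuousLinearMap.smulRight_apply,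
      ContinuousLinearMap.smul_apply, ContinuousLinearMap.neg_apply,
      piL_single_low m p hp s hs, rhoD_single, if_neg (Nat.not_lt.mpr hs)]
    simp [pdP]
  -- pdF of the even function, high direction
  have pdFE_high : ∀ (x : Fin (m + 1) → ℝ) (s : Fin (m + 1)), p < (s : ℕ) →
      pdF m s (fun x' => (-(rho m p x')) ^ k • g (projP m p x')) x =
        ((k : ℝ) * (-(rho m p x)) ^ (k - 1) * (-(2 * x s))) • g (projP m p x) := by
    intro x s hs
    simp only [pdF]
    rw [(hFEder x).fderiv]
    rw [ContinuousLinearMap.add_apply, ContinuousLinearMap.smul_apply,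
      ContinuousLinearMap.comp_apply, ContinuousLinearMap.smulRight_apply,
      ContinuousLinearMap.smul_apply, ContinuousLinearMap.neg_apply,
      piL_single_high m p hp s hs, rhoD_single, if_pos hs]
    simp [smul_smul]
  -- derivative of the sum part of the odd auxiliary function
  have hSder : ∀ x : Fin (m + 1) → ℝ,
      HasFDerivAt
        (fun x' => ∑ t : Fin (m + 1),
          if p < (t : ℕ) then x' t • (v (t : ℕ) * g (projP m p x')) else 0)
        (∑ t : Fin (m + 1),
          if p < (t : ℕ) then
            x t • ((mulL H (v (t : ℕ))).comp
              ((fderiv ℝ g (projP m p x)).comp (piL m p hp))) +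
            (ContinuousLinearMap.proj t : (Fin (m + 1) → ℝ) →L[ℝ] ℝ).smulRight
              (v (t : ℕ) * g (projP m p x))
          else 0) x := by
    intro x
    apply HasFDerivAt.fun_sum
    intro t _
    by_cases h : p < (t : ℕ)
    · simp only [if_pos h]
      have hu : HasFDerivAt (fun x' => v (t : ℕ) * g (projP m p x'))
          ((mulL H (v (t : ℕ))).comp
            ((fderiv ℝ g (projP m p x)).comp (piL m p hp))) x := by
        have h2 := (mulL H (v (t : ℕ))).hasFDerivAt.comp x (hGder x)
        simpa [Function.comp_def, mulL_apply] using h2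
      have hcoord : HasFDerivAt (fun x' : Fin (m + 1) → ℝ => x' t)
          (ContinuousLinearMap.proj t : (Fin (m + 1) → ℝ) →L[ℝ] ℝ) x := by
        exact (ContinuousLinearMap.proj t : (Fin (m + 1) → ℝ) →L[ℝ] ℝ).hasFDerivAt
      exact hcoord.smul hu
    · simp only [if_neg h]
      exact hasFDerivAt_const 0 x
  -- derivative of the odd auxiliary function
  have hFOder : ∀ x : Fin (m + 1) → ℝ,
      HasFDerivAt
        (fun x' => (-(rho m p x')) ^ k •
          ∑ t : Fin (m + 1),
            if p < (t : ℕ) then x' t • (v (t : ℕ) * g (projP m p x')) else 0)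
        ((-(rho m p x)) ^ k •
          (∑ t : Fin (m + 1),
            if p < (t : ℕ) then
              x t • ((mulL H (v (t : ℕ))).comp
                ((fderiv ℝ g (projP m p x)).comp (piL m p hp))) +
              (ContinuousLinearMap.proj t : (Fin (m + 1) → ℝ) →L[ℝ] ℝ).smulRight
                (v (t : ℕ) * g (projP m p x))
            else 0) +
          (((k : ℝ) * (-(rho m p x)) ^ (k - 1)) • (-(rhoD m p x))).smulRight
            (∑ t : Fin (m + 1),
              if p < (t : ℕ) then x t • (v (t : ℕ) * g (projP m p x)) else 0)) x :=
    fun x => (hcder x).smul (hSder x)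
  -- pdF of the odd function, low direction
  have pdFO_low : ∀ (x : Fin (m + 1) → ℝ) (s : Fin (m + 1)) (hs : (s : ℕ) ≤ p),
      pdF m s
        (fun x' => (-(rho m p x')) ^ k •
          ∑ t : Fin (m + 1),
            if p < (t : ℕ) then x' t • (v (t : ℕ) * g (projP m p x')) else 0) x =
      (-(rho m p x)) ^ k •
        (emb v m (xqpart m p x) *
          pdP p (⟨(s : ℕ), by omega⟩ : Fin (p + 1)) g (projP m p x)) := by
    intro x s hs
    simp only [pdF]
    rw [(hFOder x).fderiv]
    rw [ContinuousLinearMap.add_apply, ContinuousLinearMap.smul_apply,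
      ContinuousLinearMap.smulRight_apply, ContinuousLinearMap.smul_apply,
      ContinuousLinearMap.neg_apply, rhoD_single, if_neg (Nat.not_lt.mpr hs)]
    rw [ContinuousLinearMap.sum_apply]
    have hterm : ∀ t : Fin (m + 1),
        ((if p < (t : ℕ) then
            x t • ((mulL H (v (t : ℕ))).comp
              ((fderiv ℝ g (projP m p x)).comp (piL m p hp))) +
            (ContinuousLinearMap.proj t : (Fin (m + 1) → ℝ) →L[ℝ] ℝ).smulRight
              (v (t : ℕ) * g (projP m p x))
          else 0) : (Fin (m + 1) → ℝ) →L[ℝ] A) (Pi.single s 1) =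
        (if p < (t : ℕ) then
          x t • (v (t : ℕ) *
            pdP p (⟨(s : ℕ), by omega⟩ : Fin (p + 1)) g (projP m p x)) else 0) := by
      intro t
      by_cases h : p < (t : ℕ)
      · rw [if_pos h, if_pos h]
        rw [ContinuousLinearMap.add_apply, ContinuousLinearMap.smul_apply,
          ContinuousLinearMap.comp_apply, ContinuousLinearMap.comp_apply,
          ContinuousLinearMap.smulRight_apply, ContinuousLinearMap.proj_apply,
          piL_single_low m p hp s hs, mulL_apply]
        have hts : t ≠ s := Fin.ne_of_val_ne (by omega)
        rw [Pi.single_eq_of_ne hts]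
        simp [pdP]
      · rw [if_neg h, if_neg h, ContinuousLinearMap.zero_apply]
    rw [Finset.sum_congr rfl fun t _ => hterm t, ← emb_mul H]
    simp
  -- pdF of the odd function, high direction
  have pdFO_high : ∀ (x : Fin (m + 1) → ℝ) (s : Fin (m + 1)), p < (s : ℕ) →
      pdF m s
        (fun x' => (-(rho m p x')) ^ k •
          ∑ t : Fin (m + 1),
            if p < (t : ℕ) then x' t • (v (t : ℕ) * g (projP m p x')) else 0) x =
      (-(rho m p x)) ^ k • (v (s : ℕ) * g (projP m p x)) +
        ((k : ℝ) * (-(rho m p x)) ^ (k - 1) * (-(2 * x s))) •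
          (emb v m (xqpart m p x) * g (projP m p x)) := by
    intro x s hs
    simp only [pdF]
    rw [(hFOder x).fderiv]
    rw [ContinuousLinearMap.add_apply, ContinuousLinearMap.smul_apply,
      ContinuousLinearMap.smulRight_apply, ContinuousLinearMap.smul_apply,
      ContinuousLinearMap.neg_apply, rhoD_single, if_pos hs]
    rw [ContinuousLinearMap.sum_apply]
    have hterm : ∀ t : Fin (m + 1),
        ((if p < (t : ℕ) then
            x t • ((mulL H (v (t : ℕ))).comp
              ((fderiv ℝ g (projP m p x)).comp (piL m p hp))) +
            (ContinuousLinearMap.proj t : (Fin (m + 1) → ℝ) →L[ℝ] ℝ).smulRight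
              (v (t : ℕ) * g (projP m p x))
          else 0) : (Fin (m + 1) → ℝ) →L[ℝ] A) (Pi.single s 1) =
        (if p < (t : ℕ) then
          ((Pi.single s 1 : Fin (m + 1) → ℝ) t) • (v (t : ℕ) * g (projP m p x)) else 0) := by
      intro t
      by_cases h : p < (t : ℕ)
      · rw [if_pos h, if_pos h]
        rw [ContinuousLinearMap.add_apply, ContinuousLinearMap.smul_apply,
          ContinuousLinearMap.comp_apply, ContinuousLinearMap.comp_apply,
          ContinuousLinearMap.smulRight_apply, ContinuousLinearMap.proj_apply,
          piL_single_high m p hp s hs]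
        simp
      · rw [if_neg h, if_neg h, ContinuousLinearMap.zero_apply]
    rw [Finset.sum_congr rfl fun t _ => hterm t]
    rw [Finset.sum_eq_single s]
    · rw [if_pos hs, Pi.single_eq_same, one_smul, ← emb_mul H, smul_eq_mul]
    · intro t _ hts
      rw [Pi.single_eq_of_ne hts, zero_smul, ite_self]
    · intro h; exact absurd (Finset.mem_univ s) h
  -- preliminaries for the x_q-direction sums
  have hcond : ∀ (f : (Fin (m + 1) → ℝ) → A) (x : Fin (m + 1) → ℝ),
      Dop v m (p + 1) m f x =
        ∑ s : Fin (m + 1), if p < (s : ℕ) then v (s : ℕ) * pdF m s f x else 0 := by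
    intro f x
    unfold Dop
    refine Finset.sum_congr rfl fun s _ => ?_
    exact if_congr (by have := s.isLt; omega) rfl rfl
  have hky : ∀ y : ℝ, (k : ℝ) * y ^ (k - 1) * y = (k : ℝ) * y ^ k := by
    intro y
    cases k with
    | zero => simp
    | succ n => rw [Nat.add_sub_cancel, pow_succ]; ring
  refine ⟨?_, ?_, ?_, ?_⟩
  -- (i)
  · intro x
    have hrw : (fun x' => apow (emb v m (xqpart m p x')) (2 * k) * g (projP m p x')) =
        (fun x' => (-(rho m p x')) ^ k • g (projP m p x')) :=
      funext fun x' => apow_even_mul H hv p k x' _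
    rw [hrw, apow_even_mul H hv p k x]
    unfold Dop
    simp only [Nat.zero_le, true_and]
    rw [sum_low p hp]
    have step : ∀ s' : Fin (p + 1),
        v ((emapF p hp s' : Fin (m + 1)) : ℕ) *
          pdF m (emapF p hp s') (fun x' => (-(rho m p x')) ^ k • g (projP m p x')) x =
        (-(rho m p x)) ^ k • (v (s' : ℕ) * pdP p s' g (projP m p x)) := by
      intro s'
      rw [pdFE_low x (emapF p hp s') (by simp only [emapF]; have := s'.isLt; omega)]
      rw [H.mul_smul']
      rfl
    rw [Finset.sum_congr rfl fun s' _ => step s', ← Finset.smul_sum]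
    rfl
  -- (ii)
  · intro x
    have hrw : (fun x' => apow (emb v m (xqpart m p x')) (2 * k + 1) * g (projP m p x')) =
        (fun x' => (-(rho m p x')) ^ k •
          ∑ t : Fin (m + 1),
            if p < (t : ℕ) then x' t • (v (t : ℕ) * g (projP m p x')) else 0) := by
      funext x'
      rw [apow_odd_mul H hv p k x', emb_mul H]
    rw [hrw, apow_odd_mul H hv p k x]
    unfold Dop
    simp only [Nat.zero_le, true_and]
    rw [sum_low p hp]
    have step : ∀ s' : Fin (p + 1),
        v ((emapF p hp s' : Fin (m + 1)) : ℕ) *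
          pdF m (emapF p hp s')
            (fun x' => (-(rho m p x')) ^ k •
              ∑ t : Fin (m + 1),
                if p < (t : ℕ) then x' t • (v (t : ℕ) * g (projP m p x')) else 0) x =
        (-(rho m p x)) ^ k •
          (v (s' : ℕ) * (emb v m (xqpart m p x) * pdP p s' g (projP m p x))) := by
      intro s'
      rw [pdFO_low x (emapF p hp s') (by simp only [emapF]; have := s'.isLt; omega)]
      rw [H.mul_smul']
      rfl
    rw [Finset.sum_congr rfl fun s' _ => step s', ← Finset.smul_sum]
    congr 1
    rw [Fin.sum_univ_succ]
    have h0 : v ((0 : Fin (p + 1)) : ℕ) = 1 := hv.v_zero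
    rw [h0, H.one_mul']
    have hsw : ∀ j : Fin p,
        v ((j.succ : Fin (p + 1)) : ℕ) *
          (emb v m (xqpart m p x) * pdP p j.succ g (projP m p x)) =
        -(emb v m (xqpart m p x) *
          (v ((j.succ : Fin (p + 1)) : ℕ) * pdP p j.succ g (projP m p x))) := by
      intro j
      exact anti_swap H hv hp _ (by rw [Fin.val_succ]; omega)
        (by rw [Fin.val_succ]; have := j.isLt; omega) x _
    rw [Finset.sum_congr rfl fun j _ => hsw j, Finset.sum_neg_distrib, ← mulsum H,
      ← sub_eq_add_neg, ← mulsub H]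
    congr 1
    unfold DbaropP
    congr 1
    rw [Fin.sum_univ_succ]
    rw [if_neg (by norm_num), zero_add]
    refine Finset.sum_congr rfl fun j _ => ?_
    rw [if_pos (by rw [Fin.val_succ]; omega)]
  -- (iii)
  · intro x
    have hrw : (fun x' => apow (emb v m (xqpart m p x')) (2 * k) * g (projP m p x')) =
        (fun x' => (-(rho m p x')) ^ k • g (projP m p x')) :=
      funext fun x' => apow_even_mul H hv p k x' _
    rw [hrw, hcond]
    have step : ∀ s : Fin (m + 1),
        (if p < (s : ℕ) then
          v (s : ℕ) *
            pdF m s (fun x' => (-(rho m p x')) ^ k • g (projP m p x')) x else 0) =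
        ((k : ℝ) * (-(rho m p x)) ^ (k - 1) * (-2)) •
          (if p < (s : ℕ) then x s • (v (s : ℕ) * g (projP m p x)) else 0) := by
      intro s
      by_cases h : p < (s : ℕ)
      · rw [if_pos h, if_pos h, pdFE_high x s h, H.mul_smul', smul_smul]
        congr 1
        ring
      · rw [if_neg h, if_neg h, smul_zero]
    rw [Finset.sum_congr rfl fun s _ => step s, ← Finset.smul_sum, ← emb_mul H]
    cases k with
    | zero => simp
    | succ n =>
      rw [show 2 * (n + 1) - 1 = 2 * n + 1 from by omega, apow_odd_mul H hv p n x,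
        smul_smul]
      congr 1
      rw [Nat.add_sub_cancel]
      push_cast
      ring
  -- (iv)
  · intro x
    have hrw : (fun x' => apow (emb v m (xqpart m p x')) (2 * k + 1) * g (projP m p x')) =
        (fun x' => (-(rho m p x')) ^ k •
          ∑ t : Fin (m + 1),
            if p < (t : ℕ) then x' t • (v (t : ℕ) * g (projP m p x')) else 0) := by
      funext x'
      rw [apow_odd_mul H hv p k x', emb_mul H]
    rw [hrw, hcond, apow_even_mul H hv p k x]
    have step : ∀ s : Fin (m + 1),
        (if p < (s : ℕ) then
          v (s : ℕ) *
            pdF m s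
              (fun x' => (-(rho m p x')) ^ k •
                ∑ t : Fin (m + 1),
                  if p < (t : ℕ) then x' t • (v (t : ℕ) * g (projP m p x')) else 0) x
          else 0) =
        (if p < (s : ℕ) then (-(rho m p x)) ^ k • (-(g (projP m p x))) else 0) +
        ((k : ℝ) * (-(rho m p x)) ^ (k - 1) * (-2)) •
          (if p < (s : ℕ) then
            x s • (v (s : ℕ) * (emb v m (xqpart m p x) * g (projP m p x))) else 0) := by
      intro s
      by_cases h : p < (s : ℕ)
      · rw [if_pos h, if_pos h, if_pos h, pdFO_high x s h, H.mul_add', H.mul_smul',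
          H.mul_smul']
        have hvv : v (s : ℕ) * (v (s : ℕ) * g (projP m p x)) = -(g (projP m p x)) := by
          rw [H.alt_left, vsq H hv (s : ℕ) (by omega) (by have := s.isLt; omega),
            negmul H, H.one_mul']
        rw [hvv, smul_smul]
        congr 2
        ring
      · rw [if_neg h, if_neg h, if_neg h, smul_zero, add_zero]
    rw [Finset.sum_congr rfl fun s _ => step s, Finset.sum_add_distrib, ← Finset.smul_sum,
      ← emb_mul H]
    have hsum1 : (∑ s : Fin (m + 1),
        if p < (s : ℕ) then (-(rho m p x)) ^ k • (-(g (projP m p x))) else 0) =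
        (((m - p : ℕ) : ℝ) * (-(rho m p x)) ^ k) • (-(g (projP m p x))) := by
      have : ∀ s : Fin (m + 1),
          (if p < (s : ℕ) then (-(rho m p x)) ^ k • (-(g (projP m p x))) else 0) =
          (if p < (s : ℕ) then (1 : ℕ) else 0) •
            ((-(rho m p x)) ^ k • (-(g (projP m p x)))) := by
        intro s; by_cases h : p < (s : ℕ) <;> simp [h]
      rw [Finset.sum_congr rfl fun s _ => this s, ← Finset.sum_smul, card_high,
        ← Nat.cast_smul_eq_nsmul ℝ, smul_smul]
    rw [hsum1]
    rw [H.alt_left, xq_sq H hv p x, H.smul_mul', H.one_mul']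
    rw [smul_smul, smul_neg, ← neg_smul, smul_smul, ← add_smul]
    congr 1
    linear_combination (-2 : ℝ) * hky (-(rho m p x))


end GPSM
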